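/- arXiv:1901.04865 — 2 statements merged into one kernel-verified Lean document; each statement's English description precedes it below -/
import Mathlib

section
/- Let X be a real random variable with mean zero, variance σ² > 0, and suppose |E[X^j]| ≤ (j!)^(1+γ) K^(j−2) σ² for all j ≥ 3 (generalized Bernstein condition). Then the j-th cumulant of X satisfies |Γ_j(X)| ≤ (j!)^(1+γ) (2 max{K, σ})^(j−2) σ² for all j ≥ 3. -/
/-!
Where the moment generating function `φ` is finite on a neighbourhood of `0`, both `φ` and
the cumulant generating function `log φ` are analytic at `0`, and taking `n` derivatives of
`φ' = (log φ)' * φ` at `0` gives the moment–cumulant recursion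
`m (n + 1) = ∑ i ≤ n, (n choose i) * κ (i + 1) * m (n - i)`.
Solving it for `κ (n + 2)` and bounding each term by induction, with the submultiplicativity
`(n + 1 choose i + 1) * B (i + 2) * B (n - i) ≤ B (n + 2)` of the Bernstein profile
`B k = (k!) ^ (1 + γ) * M ^ (k - 2) * σ ^ 2` (where `M = max K σ`), the `i`-th term is at most
`2 ^ i * B (n + 2)`, and `1 + ∑ i < n, 2 ^ i = 2 ^ n`.

Otherwise `φ` is infinite on a whole side of `0`, where `cgf` takes the junk value `log 0 = 0`;
a function vanishing on a half-line has all its derivatives zero at the endpoint.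
-/

open MeasureTheory ProbabilityTheory

/-- The `j`-th cumulant of a real random variable `X`, defined as the `j`-th derivative
at `0` of the cumulant generating function `t ↦ log E[exp (t X)]`. -/
noncomputable def cumulant {Ω : Type*} [MeasurableSpace Ω] (X : Ω → ℝ) (μ : Measure Ω)
    (j : ℕ) : ℝ :=
  iteratedDeriv j (fun t => cgf X μ t) 0

open Set Filter Topology Finset

lemma Nat.choose_mul_succ_factorial_mul_factorial_le {n i : ℕ} (h : i ≤ n) :
    n.choose i * ((i + 1).factorial * (n - i).factorial) ≤ (n + 1).factorial := by
  calc n.choose i * ((i + 1).factorial * (n - i).factorial)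
      = n.choose i * i.factorial * (n - i).factorial * (i + 1) := by
        rw [Nat.factorial_succ]; ring
    _ = n.factorial * (i + 1) := by rw [Nat.choose_mul_factorial_mul_factorial h]
    _ ≤ n.factorial * (n + 1) := Nat.mul_le_mul_left _ (by omega)
    _ = (n + 1).factorial := by rw [Nat.factorial_succ, mul_comm]

lemma Real.mul_rpow_one_add_le {k P Q γ : ℝ} (hk : 1 ≤ k) (hP : 0 ≤ P) (hγ : 0 ≤ γ)
    (h : k * P ≤ Q) : k * P ^ (1 + γ) ≤ Q ^ (1 + γ) := by
  have hPQ : P ≤ Q := (le_mul_of_one_le_left hP hk).trans h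
  rw [Real.rpow_add' hP (by positivity), Real.rpow_add' (hP.trans hPQ) (by positivity),
    Real.rpow_one, Real.rpow_one, ← mul_assoc]
  exact mul_le_mul h (Real.rpow_le_rpow hP hPQ hγ) (by positivity) (by linarith)

lemma abs_le_of_moment_cumulant_recursion {m κ B : ℕ → ℝ} (hm0 : m 0 = 1) (hm1 : m 1 = 0)
    (hrec : ∀ n, m (n + 1) = ∑ i ∈ range (n + 1), n.choose i * κ (i + 1) * m (n - i))
    (hmB : ∀ k, 2 ≤ k → |m k| ≤ B k)
    (hB : ∀ n i, i + 2 ≤ n → (n + 1).choose (i + 1) * B (i + 2) * B (n - i) ≤ B (n + 2))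
    (n : ℕ) : |κ (n + 2)| ≤ 2 ^ n * B (n + 2) := by
  have hκ1 : κ 1 = 0 := by simpa [hm0, hm1] using (hrec 0).symm
  induction n using Nat.strong_induction_on with
  | _ n ih =>
  have hB0 : 0 ≤ B (n + 2) := (abs_nonneg _).trans (hmB _ (by omega))
  have hsplit : m (n + 2) = ∑ i ∈ range n, (n + 1).choose (i + 1) * κ (i + 2) * m (n - i)
      + κ (n + 2) := by
    rw [hrec (n + 1), sum_range_succ, sum_range_succ']
    simp [hκ1, hm0]
  have hterm : ∀ i ∈ range n,
      |((n + 1).choose (i + 1) : ℝ) * κ (i + 2) * m (n - i)| ≤ 2 ^ i * B (n + 2) := by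
    intro i hi
    rw [Finset.mem_range] at hi
    rcases (show n - i = 1 ∨ i + 2 ≤ n by omega) with hni | hin
    · rw [hni, hm1, mul_zero, abs_zero]; positivity
    · calc |((n + 1).choose (i + 1) : ℝ) * κ (i + 2) * m (n - i)|
          = (n + 1).choose (i + 1) * |κ (i + 2)| * |m (n - i)| := by
            rw [abs_mul, abs_mul, Nat.abs_cast]
        _ ≤ (n + 1).choose (i + 1) * (2 ^ i * B (i + 2)) * B (n - i) := by
            have hκ := ih i hi
            have hm := hmB (n - i) (by omega)
            have hBi : 0 ≤ B (i + 2) := (abs_nonneg _).trans (hmB _ le_add_self)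
            gcongr
        _ = 2 ^ i * ((n + 1).choose (i + 1) * B (i + 2) * B (n - i)) := by ring
        _ ≤ 2 ^ i * B (n + 2) := by gcongr; exact hB n i hin
  have hgeom : ∑ i ∈ range n, (2 : ℝ) ^ i = 2 ^ n - 1 := by
    rw [geom_sum_eq (by norm_num)]; norm_num
  calc |κ (n + 2)|
      = |m (n + 2) - ∑ i ∈ range n, (n + 1).choose (i + 1) * κ (i + 2) * m (n - i)| := by
        rw [hsplit, add_sub_cancel_left]
    _ ≤ |m (n + 2)| + ∑ i ∈ range n, |((n + 1).choose (i + 1) : ℝ) * κ (i + 2) * m (n - i)| :=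
        (abs_sub _ _).trans (by gcongr; exact abs_sum_le_sum_abs _ _)
    _ ≤ B (n + 2) + ∑ i ∈ range n, 2 ^ i * B (n + 2) := by
        gcongr with i hi
        · exact hmB _ (by omega)
        · exact hterm i hi
    _ = 2 ^ n * B (n + 2) := by rw [← sum_mul, hgeom]; ring

noncomputable def bernsteinBound (γ M σ : ℝ) (k : ℕ) : ℝ :=
  (k.factorial : ℝ) ^ (1 + γ) * M ^ (k - 2) * σ ^ 2

lemma bernsteinBound_mul_le {γ M σ : ℝ} (hγ : 0 ≤ γ) (hσ : 0 ≤ σ) (hσM : σ ≤ M) {n i : ℕ}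
    (h : i + 2 ≤ n) :
    (n + 1).choose (i + 1) * bernsteinBound γ M σ (i + 2) * bernsteinBound γ M σ (n - i)
      ≤ bernsteinBound γ M σ (n + 2) := by
  have hfact : ((n + 1).choose (i + 1) : ℝ) * (((i + 2).factorial * (n - i).factorial : ℕ) : ℝ)
      ≤ ((n + 2).factorial : ℕ) := by
    have := Nat.choose_mul_succ_factorial_mul_factorial_le (show i + 1 ≤ n + 1 by omega)
    rw [Nat.add_sub_add_right] at this
    exact_mod_cast this
  have hfact' := Real.mul_rpow_one_add_le (by exact_mod_cast Nat.choose_pos (by omega))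
    (Nat.cast_nonneg _) hγ hfact
  have hM : 0 ≤ M := hσ.trans hσM
  have hpow : M ^ i * M ^ (n - i - 2) * σ ^ 2 ≤ M ^ n := by
    calc M ^ i * M ^ (n - i - 2) * σ ^ 2 ≤ M ^ i * M ^ (n - i - 2) * M ^ 2 := by
          gcongr
      _ = M ^ n := by rw [← pow_add, ← pow_add]; congr 1; omega
  push_cast at hfact'
  rw [Real.mul_rpow (by positivity) (by positivity)] at hfact'
  unfold bernsteinBound
  rw [show i + 2 - 2 = i by omega, show n + 2 - 2 = n by omega]
  calc ((n + 1).choose (i + 1) : ℝ) * (((i + 2).factorial : ℝ) ^ (1 + γ) * M ^ i * σ ^ 2)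
        * (((n - i).factorial : ℝ) ^ (1 + γ) * M ^ (n - i - 2) * σ ^ 2)
      = ((n + 1).choose (i + 1) * (((i + 2).factorial : ℝ) ^ (1 + γ)
          * ((n - i).factorial : ℝ) ^ (1 + γ))) * (M ^ i * M ^ (n - i - 2) * σ ^ 2) * σ ^ 2 := by
        ring
    _ ≤ ((n + 2).factorial : ℝ) ^ (1 + γ) * M ^ n * σ ^ 2 := by
        gcongr

lemma iteratedDeriv_eqOn_zero_of_eqOn_zero {𝕜 F : Type*} [NontriviallyNormedField 𝕜]
    [NormedAddCommGroup F] [NormedSpace 𝕜 F] {f : 𝕜 → F} {s : Set 𝕜}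
    (hs : UniqueDiffOn 𝕜 s) (hf : EqOn f 0 s) (n : ℕ) : EqOn (iteratedDeriv n f) 0 s := by
  induction n with
  | zero => simpa using hf
  | succ n ih =>
    intro x hx
    rw [iteratedDeriv_succ]
    by_cases hd : DifferentiableAt 𝕜 (iteratedDeriv n f) x
    · rw [← hd.derivWithin (hs x hx), derivWithin_congr ih (ih hx)]
      simp
    · exact deriv_zero_of_not_differentiableAt hd

section

variable {Ω : Type*} [MeasurableSpace Ω] {μ : Measure Ω} {X : Ω → ℝ}

lemma cumulant_eq_zero_of_zero_notMem_interior [IsProbabilityMeasure μ]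
    (h : 0 ∉ interior (integrableExpSet X μ)) (j : ℕ) : cumulant X μ j = 0 := by
  have hcgf : ∀ t, t = 0 ∨ t ∉ integrableExpSet X μ → cgf X μ t = 0 := by
    rintro t (rfl | ht)
    · exact cgf_zero
    · exact cgf_undef ht
  have hhalf : (∀ t, 0 < t → t ∉ integrableExpSet X μ) ∨
      ∀ t, t < 0 → t ∉ integrableExpSet X μ := by
    by_contra! ⟨⟨b, hb, hbS⟩, ⟨a, ha, haS⟩⟩
    exact h (mem_interior_iff_mem_nhds.2 (mem_of_superset (Ioo_mem_nhds ha hb)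
      (Ioo_subset_Icc_self.trans (convex_integrableExpSet.ordConnected.out haS hbS))))
  rcases hhalf with hpos | hneg
  · refine iteratedDeriv_eqOn_zero_of_eqOn_zero (uniqueDiffOn_Ici 0)
      (fun t ht => hcgf t ?_) j self_mem_Ici
    exact (eq_or_lt_of_le ht).imp Eq.symm (hpos t)
  · refine iteratedDeriv_eqOn_zero_of_eqOn_zero (uniqueDiffOn_Iic 0)
      (fun t ht => hcgf t ?_) j self_mem_Iic
    exact (eq_or_lt_of_le ht).imp id (hneg t)

lemma integral_pow_succ_eq_sum_cumulant_mul [NeZero μ]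
    (h : 0 ∈ interior (integrableExpSet X μ)) (n : ℕ) :
    ∫ ω, X ω ^ (n + 1) ∂μ =
      ∑ i ∈ range (n + 1), n.choose i * cumulant X μ (i + 1) * ∫ ω, X ω ^ (n - i) ∂μ := by
  have hderiv : deriv (mgf X μ) =ᶠ[𝓝 0] deriv (cgf X μ) * mgf X μ := by
    filter_upwards [isOpen_interior.mem_nhds h] with t ht
    have hmgf := mgf_pos' (NeZero.ne μ) (interior_subset (s := integrableExpSet X μ) ht)
    rw [Pi.mul_apply, deriv_cgf ht, deriv_mgf ht, div_mul_cancel₀ _ hmgf.ne']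
  have hmoment : ∀ k, ∫ ω, X ω ^ k ∂μ = iteratedDeriv k (mgf X μ) 0 := fun k => by
    rw [iteratedDeriv_mgf_zero h]; rfl
  calc ∫ ω, X ω ^ (n + 1) ∂μ = iteratedDeriv n (deriv (mgf X μ)) 0 := by
        rw [← iteratedDeriv_succ', hmoment]
    _ = iteratedDeriv n (deriv (cgf X μ) * mgf X μ) 0 := hderiv.iteratedDeriv_eq n
    _ = _ := by
        rw [iteratedDeriv_mul (analyticAt_cgf h).deriv.contDiffAt (analyticAt_mgf h).contDiffAt]
        simp only [← iteratedDeriv_succ', hmoment, cumulant]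

lemma abs_integral_pow_le_bernsteinBound {σ γ K M : ℝ} (hγ : 0 ≤ γ) (hK : 0 ≤ K) (hKM : K ≤ M)
    (hvar : ∫ ω, X ω ^ 2 ∂μ = σ ^ 2)
    (hmom : ∀ j : ℕ, 3 ≤ j →
      |∫ ω, X ω ^ j ∂μ| ≤ (j.factorial : ℝ) ^ (1 + γ) * K ^ (j - 2) * σ ^ 2)
    {k : ℕ} (hk : 2 ≤ k) : |∫ ω, X ω ^ k ∂μ| ≤ bernsteinBound γ M σ k := by
  rcases hk.eq_or_lt with rfl | hk3
  · have hfact : (1 : ℝ) ≤ ((Nat.factorial 2 : ℕ) : ℝ) ^ (1 + γ) :=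
      Real.one_le_rpow (by norm_num [Nat.factorial]) (by linarith)
    rw [hvar, abs_of_nonneg (by positivity), bernsteinBound, Nat.sub_self, pow_zero, mul_one]
    exact le_mul_of_one_le_left (by positivity) hfact
  · refine (hmom k hk3).trans ?_
    unfold bernsteinBound
    gcongr

end


theorem cumulant_bound_of_bernstein_general {Ω : Type*} [MeasurableSpace Ω]
    (μ : Measure Ω) [IsProbabilityMeasure μ] (X : Ω → ℝ)
    (σ γ K : ℝ) (hσ : 0 < σ) (hγ : 0 ≤ γ) (hK : 0 < K)
    (hmean : ∫ ω, X ω ∂μ = 0) (hvar : ∫ ω, X ω ^ 2 ∂μ = σ ^ 2)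
    (hmom : ∀ j : ℕ, 3 ≤ j →
      |∫ ω, X ω ^ j ∂μ| ≤ (j.factorial : ℝ) ^ (1 + γ) * K ^ (j - 2) * σ ^ 2) :
    ∀ j : ℕ, 3 ≤ j →
      |cumulant X μ j| ≤ (j.factorial : ℝ) ^ (1 + γ) * (2 * max K σ) ^ (j - 2) * σ ^ 2 := by
  intro j hj
  by_cases h0 : 0 ∈ interior (integrableExpSet X μ)
  swap
  · have hM : 0 < max K σ := lt_max_of_lt_left hK
    rw [cumulant_eq_zero_of_zero_notMem_interior h0, abs_zero]
    positivity
  obtain ⟨n, rfl⟩ : ∃ n, j = n + 2 := ⟨j - 2, by omega⟩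
  have key := abs_le_of_moment_cumulant_recursion (by simp) (by simpa using hmean)
    (integral_pow_succ_eq_sum_cumulant_mul h0)
    (fun k => abs_integral_pow_le_bernsteinBound hγ hK.le (le_max_left K σ) hvar hmom)
    (fun n i => bernsteinBound_mul_le hγ hσ.le (le_max_right K σ)) n
  rw [Nat.add_sub_cancel, mul_pow]
  simpa only [bernsteinBound, Nat.add_sub_cancel, mul_assoc, mul_left_comm] using key

theorem cumulant_bound_of_bernstein {Ω : Type*} [MeasurableSpace Ω]
    (μ : Measure Ω) [IsProbabilityMeasure μ] (X : Ω → ℝ)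
    (σ γ K : ℝ) (hσ : 0 < σ) (hγ : 0 ≤ γ) (hK : 0 < K)
    (hInt : ∀ j : ℕ, Integrable (fun ω => X ω ^ j) μ)
    (hmean : ∫ ω, X ω ∂μ = 0) (hvar : ∫ ω, X ω ^ 2 ∂μ = σ ^ 2)
    (hmom : ∀ j : ℕ, 3 ≤ j →
      |∫ ω, X ω ^ j ∂μ| ≤ (j.factorial : ℝ) ^ (1 + γ) * K ^ (j - 2) * σ ^ 2) :
    ∀ j : ℕ, 3 ≤ j →
      |cumulant X μ j| ≤ (j.factorial : ℝ) ^ (1 + γ) * (2 * max K σ) ^ (j - 2) * σ ^ 2 :=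
  cumulant_bound_of_bernstein_general μ X σ γ K hσ hγ hK hmean hvar hmom
end

section
/- For all j ≥ 3 and any 1 ≤ p(n) ≤ n, Σ_{k=1}^{p(n)} |ψ^(j−1)((k + n − p(n))/2)| ≤ 2^(j+1) (j−1)!. -/
/-!
Differentiating the Euler limit `log Γ(x) = lim (x log N + log N! - ∑_{i ≤ N} log (x + i))` term by
term (the derivatives converge uniformly on compact subsets of `x > 0`) gives
`ψ^(q+1)(x) = (-1)^q (q+1)! ∑_{i ≥ 0} (x + i)^-(q+2)`. For `x ≥ 1/2` the series of order `q + 3`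
is dominated termwise by the telescoping series of `2^q · 9/4 · (x⁻² - (x+1)⁻²)`, so
`|ψ^(j-1)(m/2)| ≤ 9 · 2^(j-3) (j-1)! / m²`. The arguments `(k + n - p)/2` have distinct numerators
`m ≥ 1`, and `9 ζ(2) = 3π²/2 < 16`.
-/

/-- The polygamma function of order `j`: the `(j+1)`-st derivative of `log ∘ Γ`. -/
noncomputable def polygamma (j : ℕ) (z : ℝ) : ℝ :=
  iteratedDeriv (j + 1) (fun x => Real.log (Real.Gamma x)) z

open Real Filter Topology Finset

noncomputable def hurwitzSeries (m : ℕ) (x : ℝ) : ℝ := ∑' i : ℕ, ((x + i) ^ m)⁻¹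

noncomputable def digammaSeries (x : ℝ) : ℝ :=
  -eulerMascheroniConstant + ∑' i : ℕ, (((i : ℝ) + 1)⁻¹ - (x + i)⁻¹)

lemma summable_inv_add_pow {a : ℝ} (ha : 0 < a) {m : ℕ} (hm : 2 ≤ m) :
    Summable fun i : ℕ => ((a + i) ^ m)⁻¹ := by
  refine ((summable_one_div_nat_add_rpow a m).2 (by exact_mod_cast hm)).congr fun i => ?_
  rw [abs_of_pos (by positivity), rpow_natCast, add_comm, one_div]

lemma hasDerivAt_inv_add_pow (m : ℕ) {c y : ℝ} (hy : y + c ≠ 0) :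
    HasDerivAt (fun z => ((z + c) ^ m)⁻¹) (-m * ((y + c) ^ (m + 1))⁻¹) y := by
  have h := (hasDerivAt_zpow (-m) (y + c) (Or.inl hy)).comp_add_const y c
  simp only [zpow_neg, zpow_natCast, show -(m : ℤ) - 1 = -((m + 1 : ℕ) : ℤ) by push_cast; ring,
    Int.cast_neg, Int.cast_natCast] at h
  exact h

lemma hasDerivAt_hurwitzSeries {m : ℕ} (hm : 2 ≤ m) {x : ℝ} (hx : 0 < x) :
    HasDerivAt (hurwitzSeries m) (-m * hurwitzSeries (m + 1) x) x := by
  have hpos : ∀ y ∈ Set.Ioi (x / 2), ∀ i : ℕ, 0 < y + i := fun y (hy : x / 2 < y) i => by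
    linarith [i.cast_nonneg (α := ℝ)]
  have hxt : x ∈ Set.Ioi (x / 2) := half_lt_self hx
  have h := hasDerivAt_tsum_of_isPreconnected (g := fun (i : ℕ) (y : ℝ) => ((y + i) ^ m)⁻¹)
    (g' := fun (i : ℕ) (y : ℝ) => -m * ((y + i) ^ (m + 1))⁻¹)
    ((summable_inv_add_pow (half_pos hx) (by omega : 2 ≤ m + 1)).mul_left (m : ℝ))
    isOpen_Ioi isPreconnected_Ioi (fun i y hy => hasDerivAt_inv_add_pow m (hpos y hy i).ne')
    (fun i y hy => ?_) hxt (summable_inv_add_pow hx hm) hxt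
  · rwa [tsum_mul_left] at h
  · have : x / 2 < y := hy
    rw [norm_mul, norm_neg, Real.norm_natCast, norm_inv, norm_pow,
      Real.norm_of_nonneg (hpos y hy i).le]
    gcongr

lemma hasDerivAt_digammaSeries {x : ℝ} (hx : 0 < x) :
    HasDerivAt digammaSeries (hurwitzSeries 2 x) x := by
  set a := min x 1 / 2
  have ha : 0 < a := by positivity
  have hpos : ∀ y ∈ Set.Ioi a, ∀ i : ℕ, 0 < y + i := fun y (hy : a < y) i => by
    linarith [i.cast_nonneg (α := ℝ)]
  have hxt : x ∈ Set.Ioi a := show a < x by simp only [a]; linarith [min_le_left x 1]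
  have h1t : 1 ∈ Set.Ioi a := show a < 1 by
    simp only [a]; linarith [min_le_left x 1, min_le_right x 1]
  -- summability is checked at `y = 1`, where every term vanishes
  have h := hasDerivAt_tsum_of_isPreconnected
    (g := fun (i : ℕ) (y : ℝ) => ((i : ℝ) + 1)⁻¹ - (y + i)⁻¹)
    (g' := fun (i : ℕ) (y : ℝ) => ((y + i) ^ 2)⁻¹)
    (summable_inv_add_pow ha le_rfl) isOpen_Ioi isPreconnected_Ioi
    (fun i y hy => ?_) (fun i y hy => ?_) h1t (by simp [add_comm]) hxt
  · exact h.const_add _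
  · simpa using (hasDerivAt_inv_add_pow 1 (hpos y hy i).ne').const_sub ((i : ℝ) + 1)⁻¹
  · have : a < y := hy
    rw [norm_inv, norm_pow, Real.norm_of_nonneg (hpos y hy i).le]
    gcongr

lemma hasDerivAt_logGammaSeq (N : ℕ) {x : ℝ} (hx : 0 < x) :
    HasDerivAt (BohrMollerup.logGammaSeq · N) (log N - ∑ i ∈ range (N + 1), (x + i)⁻¹) x := by
  have hlog : ∀ i ∈ range (N + 1), HasDerivAt (fun y => log (y + i)) (x + i)⁻¹ x := fun i _ => by
    simpa using ((hasDerivAt_id x).add_const (i : ℝ)).log (by positivity)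
  unfold BohrMollerup.logGammaSeq
  simpa using (((hasDerivAt_id' x).mul_const (log N)).add_const (log N.factorial)).fun_sub
    (HasDerivAt.fun_sum hlog)

lemma tendsto_log_sub_sum_range_succ_inv :
    Tendsto (fun N : ℕ => log N - ∑ i ∈ range (N + 1), ((i : ℝ) + 1)⁻¹) atTop
      (𝓝 (-eulerMascheroniConstant)) := by
  have h := ((tendsto_harmonic_sub_log.comp (tendsto_add_atTop_nat 1)).add
    tendsto_log_nat_add_one_sub_log).neg
  rw [add_zero] at h
  refine h.congr fun N => ?_
  simp [harmonic]

lemma tendstoUniformlyOn_deriv_logGammaSeq {a b : ℝ} (ha : 0 < a) (ha1 : a ≤ 1) :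
    TendstoUniformlyOn (fun (N : ℕ) (x : ℝ) => log N - ∑ i ∈ range (N + 1), (x + i)⁻¹)
      digammaSeries atTop (Set.Ioo a b) := by
  have hbound : ∀ (i : ℕ), ∀ x ∈ Set.Ioo a b,
      ‖((i : ℝ) + 1)⁻¹ - (x + i)⁻¹‖ ≤ (|b| + 1) * ((a + i) ^ 2)⁻¹ := by
    rintro i x ⟨hax, hxb⟩
    have hi := i.cast_nonneg (α := ℝ)
    have hxi : 0 < x + i := by linarith
    rw [Real.norm_eq_abs, inv_sub_inv (by positivity) hxi.ne', abs_div,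
      abs_of_pos (mul_pos (by positivity) hxi), div_eq_mul_inv]
    gcongr
    · rw [abs_le]
      constructor <;> linarith [le_abs_self b]
    · nlinarith
  have hseries := tendstoUniformlyOn_tsum_nat
    ((summable_inv_add_pow ha le_rfl).mul_left (|b| + 1)) hbound
  have hshift : TendstoUniformlyOn
      (fun (N : ℕ) (x : ℝ) => ∑ i ∈ range (N + 1), (((i : ℝ) + 1)⁻¹ - (x + i)⁻¹))
      (fun x => ∑' i : ℕ, (((i : ℝ) + 1)⁻¹ - (x + i)⁻¹)) atTop (Set.Ioo a b) :=
    fun u hu => (tendsto_add_atTop_nat 1).eventually (hseries u hu)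
  refine ((tendsto_log_sub_sum_range_succ_inv.tendstoUniformlyOn_const _).add hshift).congr ?_
  filter_upwards with N x _
  simp only [Pi.add_apply, sum_sub_distrib]
  ring

lemma hasDerivAt_log_Gamma {x : ℝ} (hx : 0 < x) :
    HasDerivAt (fun y => log (Gamma y)) (digammaSeries x) x := by
  set a := min x 1 / 2
  have ha : 0 < a := by positivity
  have ha1 : a ≤ 1 := by simp only [a]; linarith [min_le_right x 1]
  have hxa : x ∈ Set.Ioo a (x + 1) := ⟨by simp only [a]; linarith [min_le_left x 1], by linarith⟩
  refine hasDerivAt_of_tendstoUniformlyOn isOpen_Ioo (tendstoUniformlyOn_deriv_logGammaSeq ha ha1)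
    (Eventually.of_forall fun N y hy => hasDerivAt_logGammaSeq N (ha.trans hy.1))
    (fun y hy => BohrMollerup.tendsto_log_gamma (ha.trans hy.1)) hxa

lemma iteratedDeriv_succ_eq_of_eqOn {𝕜 F : Type*} [NontriviallyNormedField 𝕜]
    [NormedAddCommGroup F] [NormedSpace 𝕜 F] {f g : 𝕜 → F} {g' : F} {s : Set 𝕜} {n : ℕ} {x : 𝕜}
    (hs : IsOpen s) (hfg : Set.EqOn (iteratedDeriv n f) g s) (hx : x ∈ s)
    (hg : HasDerivAt g g' x) : iteratedDeriv (n + 1) f x = g' := by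
  rw [iteratedDeriv_succ, (hfg.eventuallyEq_of_mem (hs.mem_nhds hx)).deriv_eq, hg.deriv]

lemma polygamma_zero_eq_digammaSeries {x : ℝ} (hx : 0 < x) : polygamma 0 x = digammaSeries x :=
  iteratedDeriv_succ_eq_of_eqOn isOpen_Ioi (fun y _ => by simp) (Set.mem_Ioi.2 hx)
    (hasDerivAt_log_Gamma hx)

theorem polygamma_add_one_eq_hurwitzSeries (q : ℕ) {x : ℝ} (hx : 0 < x) :
    polygamma (q + 1) x = (-1) ^ q * (q + 1).factorial * hurwitzSeries (q + 2) x := by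
  induction q generalizing x with
  | zero =>
    rw [pow_zero, one_mul, Nat.factorial_one, Nat.cast_one, one_mul]
    exact iteratedDeriv_succ_eq_of_eqOn isOpen_Ioi (fun y hy => polygamma_zero_eq_digammaSeries hy)
      (Set.mem_Ioi.2 hx) (hasDerivAt_digammaSeries hx)
  | succ q ih =>
    refine iteratedDeriv_succ_eq_of_eqOn isOpen_Ioi (fun y hy => ih hy) (Set.mem_Ioi.2 hx)
      (((hasDerivAt_hurwitzSeries (by omega) hx).const_mul _).congr_deriv ?_)
    push_cast [Nat.factorial_succ]
    ring

lemma tsum_le_of_le_sub_succ {f g : ℕ → ℝ} (hf : ∀ i, 0 ≤ f i) (hg : ∀ i, 0 ≤ g i)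
    (hfg : ∀ i, f i ≤ g i - g (i + 1)) : ∑' i, f i ≤ g 0 :=
  Real.tsum_le_of_sum_range_le hf fun N =>
    calc ∑ i ∈ range N, f i ≤ ∑ i ∈ range N, (g i - g (i + 1)) := sum_le_sum fun i _ => hfg i
      _ = g 0 - g N := sum_range_sub' g N
      _ ≤ g 0 := sub_le_self _ (hg N)

lemma inv_pow_add_three_le (q : ℕ) {y : ℝ} (hy : 1 / 2 ≤ y) :
    (y ^ (q + 3))⁻¹ ≤ 2 ^ q * (9 / (4 * y ^ 2) - 9 / (4 * (y + 1) ^ 2)) := by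
  have hy0 : 0 < y := by linarith
  have hcube : (y ^ 3)⁻¹ ≤ 9 / (4 * y ^ 2) - 9 / (4 * (y + 1) ^ 2) := by
    have hgap : 9 / (4 * y ^ 2) - 9 / (4 * (y + 1) ^ 2) - (y ^ 3)⁻¹ =
        (2 * y - 1) * (7 * y + 4) / (4 * y ^ 3 * (y + 1) ^ 2) := by
      field_simp
      ring
    have : 0 ≤ (2 * y - 1) * (7 * y + 4) / (4 * y ^ 3 * (y + 1) ^ 2) :=
      div_nonneg (mul_nonneg (by linarith) (by linarith)) (by positivity)
    linarith
  calc (y ^ (q + 3))⁻¹ = 2 ^ q * (y ^ 3)⁻¹ * ((2 * y) ^ q)⁻¹ := by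
        rw [mul_pow]; field_simp; ring
    _ ≤ 2 ^ q * (y ^ 3)⁻¹ :=
        mul_le_of_le_one_right (by positivity) (inv_le_one_of_one_le₀ (one_le_pow₀ (by linarith)))
    _ ≤ _ := by gcongr

lemma hurwitzSeries_le (q : ℕ) {x : ℝ} (hx : 1 / 2 ≤ x) :
    hurwitzSeries (q + 3) x ≤ 2 ^ q * 9 / (4 * x ^ 2) := by
  have hxi : ∀ i : ℕ, 1 / 2 ≤ x + i := fun i => by linarith [i.cast_nonneg (α := ℝ)]
  have h := tsum_le_of_le_sub_succ (f := fun i : ℕ => ((x + i) ^ (q + 3))⁻¹)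
    (g := fun i : ℕ => 2 ^ q * (9 / (4 * (x + i) ^ 2))) (fun i => by positivity)
    (fun i => by positivity) fun i => by
      simpa [mul_sub, add_assoc] using inv_pow_add_three_le q (hxi i)
  simpa [hurwitzSeries, mul_div_assoc] using h

lemma abs_polygamma_le (q : ℕ) {x : ℝ} (hx : 1 / 2 ≤ x) :
    |polygamma (q + 2) x| ≤ 2 ^ q * (q + 2).factorial * 9 / (4 * x ^ 2) := by
  have hsum : 0 ≤ hurwitzSeries (q + 3) x := tsum_nonneg fun i => by
    have := i.cast_nonneg (α := ℝ)
    have : 0 < x + i := by linarith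
    positivity
  rw [polygamma_add_one_eq_hurwitzSeries (q + 1) (by linarith), abs_mul, abs_mul, abs_pow,
    abs_neg, abs_one, one_pow, one_mul, Nat.abs_cast, abs_of_nonneg hsum]
  calc ((q + 2).factorial : ℝ) * hurwitzSeries (q + 3) x
      ≤ (q + 2).factorial * (2 ^ q * 9 / (4 * x ^ 2)) := by gcongr; exact hurwitzSeries_le q hx
    _ = _ := by ring

theorem polygamma_sum_bound_universal_general (n p j : ℕ) (hj : 3 ≤ j) (hpn : p ≤ n) :
    ∑ k ∈ Finset.Icc 1 p, |polygamma (j - 1) (((k : ℝ) + n - p) / 2)| ≤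
      2 ^ (j + 1) * ((j - 1).factorial : ℝ) := by
  obtain ⟨q, rfl⟩ : ∃ q, j = q + 3 := ⟨j - 3, by omega⟩
  set C : ℝ := 2 ^ q * (q + 2).factorial * 9
  have hterm : ∀ k ∈ Icc 1 p, |polygamma (q + 3 - 1) (((k : ℝ) + n - p) / 2)| ≤
      C * (1 / ((k + (n - p) : ℕ) : ℝ) ^ 2) := by
    intro k hk
    have hm : (1 : ℝ) ≤ ((k + (n - p) : ℕ) : ℝ) := by
      exact_mod_cast (by simp only [mem_Icc] at hk; omega)
    have hcast : (k : ℝ) + n - p = ((k + (n - p) : ℕ) : ℝ) := by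
      push_cast [Nat.cast_sub hpn]
      ring
    rw [hcast]
    refine (abs_polygamma_le q (x := ((k + (n - p) : ℕ) : ℝ) / 2) (by linarith)).trans_eq ?_
    field_simp
    ring
  have hzeta : ∑ k ∈ Icc 1 p, 1 / ((k + (n - p) : ℕ) : ℝ) ^ 2 ≤ π ^ 2 / 6 := by
    have h := sum_le_hasSum ((Icc 1 p).map (addRightEmbedding (n - p)))
      (fun _ _ => by positivity) hasSum_zeta_two
    rwa [sum_map] at h
  calc _ ≤ C * ∑ k ∈ Icc 1 p, 1 / ((k + (n - p) : ℕ) : ℝ) ^ 2 := by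
        rw [mul_sum]
        exact sum_le_sum hterm
    _ ≤ C * (π ^ 2 / 6) := by gcongr
    _ ≤ 2 ^ (q + 3 + 1) * ((q + 3 - 1).factorial : ℝ) := by
        have : π ^ 2 / 6 * 9 ≤ 16 := by nlinarith [pi_pos, pi_lt_d2]
        simp only [C, show q + 3 - 1 = q + 2 by omega, pow_add]
        have : (0 : ℝ) ≤ 2 ^ q * (q + 2).factorial := by positivity
        nlinarith

theorem polygamma_sum_bound_universal (n p j : ℕ) (hj : 3 ≤ j) (hp : 1 ≤ p) (hpn : p ≤ n) :
    ∑ k ∈ Finset.Icc 1 p, |polygamma (j - 1) (((k : ℝ) + n - p) / 2)| ≤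
      2 ^ (j + 1) * ((j - 1).factorial : ℝ) :=
  polygamma_sum_bound_universal_general n p j hj hpn
end
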